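/- Let N \ge 3, let z_1 > ... > z_N be the zeros of H_N, and let S_N be the matrix with s_{ii} = 1 + \sum_{l \ne i}(z_i-z_l)^{-2}, s_{ij} = -(z_i-z_j)^{-2} for i \ne j. Then the vector with entries z_i^2 - (N-1)/2 is an eigenvector of S_N with eigenvalue 3. -/

import Mathlib

/-!
Write `H_N = c ∏ⱼ (X - zⱼ)`. Peeling off the factor `X - zᵢ` and taking the logarithmic derivative
of the rest gives `H_N''(zᵢ) = 2 H_N'(zᵢ) ∑_{j ≠ i} (zᵢ - zⱼ)⁻¹`, while the Hermite equation
`H'' = 2X H' - 2N H` gives `H_N''(zᵢ) = 2 zᵢ H_N'(zᵢ)`. Since the roots are simple,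
`zᵢ = ∑_{j ≠ i} (zᵢ - zⱼ)⁻¹`. Row `i` of `S_N v` is `vᵢ + ∑_{j ≠ i} (zᵢ² - zⱼ²) / (zᵢ - zⱼ)²`, and
each summand is `(zᵢ + zⱼ) / (zᵢ - zⱼ) = 2 zᵢ / (zᵢ - zⱼ) - 1`, so the row equals
`vᵢ + 2 zᵢ² - (N - 1) = 3 vᵢ`. Finally `v ≠ 0`, as three distinct reals cannot have the same square.
-/

open Polynomial Finset Matrix

/-- The physicists' Hermite polynomials, orthogonal w.r.t. the weight `e^{-x^2}`. -/
noncomputable def physHermite : ℕ → Polynomial ℝ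
  | 0 => 1
  | 1 => 2 * X
  | n + 2 => 2 * X * physHermite (n + 1) - C (2 * ((n : ℝ) + 1)) * physHermite n

open Lagrange

theorem physHermite_succ_succ (n : ℕ) :
    physHermite (n + 2) = 2 * X * physHermite (n + 1) - C (2 * ((n : ℝ) + 1)) * physHermite n :=
  rfl

theorem natDegree_physHermite_le : ∀ n, (physHermite n).natDegree ≤ n
  | 0 => by simp [physHermite]
  | 1 => by simp [physHermite]
  | n + 2 => by
    rw [physHermite_succ_succ]
    refine (natDegree_sub_le _ _).trans (max_le ?_ ?_)
    · calc (2 * X * physHermite (n + 1)).natDegree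
          ≤ (2 * X : ℝ[X]).natDegree + (physHermite (n + 1)).natDegree := natDegree_mul_le
        _ ≤ 1 + (n + 1) := add_le_add (by compute_degree) (natDegree_physHermite_le _)
        _ = n + 2 := by ring
    · exact (natDegree_C_mul_le _ _).trans ((natDegree_physHermite_le n).trans (by omega))

theorem coeff_physHermite_self : ∀ n, (physHermite n).coeff n = 2 ^ n
  | 0 => by simp [physHermite]
  | 1 => by simp [physHermite]
  | n + 2 => by
    rw [physHermite_succ_succ, coeff_sub, coeff_C_mul, mul_assoc, coeff_ofNat_mul, coeff_X_mul,
      coeff_physHermite_self (n + 1),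
      coeff_eq_zero_of_natDegree_lt ((natDegree_physHermite_le n).trans_lt (by omega))]
    ring

theorem physHermite_ne_zero (n : ℕ) : physHermite n ≠ 0 := fun h ↦
  pow_ne_zero n (two_ne_zero (α := ℝ)) <| by rw [← coeff_physHermite_self n, h, coeff_zero]

theorem derivative_physHermite_succ :
    ∀ n : ℕ, derivative (physHermite (n + 1)) = C (2 * ((n : ℝ) + 1)) * physHermite n
  | 0 => by simp [physHermite, map_ofNat C]
  | 1 => by
    simp only [physHermite, derivative_sub, derivative_mul, derivative_ofNat, derivative_X,
      map_ofNat C, map_mul, map_add, map_one, Nat.cast_one, CharP.cast_eq_zero, zero_add, zero_mul,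
      mul_one, sub_zero]
    ring
  | n + 2 => by
    rw [physHermite_succ_succ (n + 1), derivative_sub, derivative_mul, derivative_mul,
      derivative_C_mul, derivative_physHermite_succ (n + 1), derivative_physHermite_succ n,
      physHermite_succ_succ n]
    simp only [derivative_ofNat, derivative_X, map_mul, map_add, map_ofNat, map_one, map_natCast]
    push_cast
    ring

theorem physHermite_succ (n : ℕ) :
    physHermite (n + 1) = 2 * X * physHermite n - derivative (physHermite n) := by
  cases n with
  | zero => simp [physHermite]
  | succ n => rw [physHermite_succ_succ, derivative_physHermite_succ]

theorem derivative_derivative_physHermite (n : ℕ) :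
    derivative (derivative (physHermite n)) =
      2 * X * derivative (physHermite n) - C (2 * (n : ℝ)) * physHermite n := by
  have h := congrArg derivative (physHermite_succ n)
  rw [derivative_physHermite_succ, derivative_sub, derivative_mul, derivative_mul] at h
  simp only [derivative_ofNat, derivative_X, map_mul, map_add, map_ofNat, map_one, map_natCast] at h ⊢
  linear_combination h

section Nodal

variable {K ι : Type*} [Field K] [DecidableEq ι] {s : Finset ι} {v : ι → K}

theorem eval_derivative_nodal_eq_mul_sum_inv {x : K} (hx : ∀ j ∈ s, x ≠ v j) :
    eval x (derivative (nodal s v)) = eval x (nodal s v) * ∑ j ∈ s, (x - v j)⁻¹ := by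
  rw [derivative_nodal, eval_finsetSum, mul_sum]
  refine sum_congr rfl fun j hj ↦ ?_
  rw [eval_nodal, eval_nodal, ← mul_prod_erase s _ hj, mul_comm (x - v j),
    mul_inv_cancel_right₀ (sub_ne_zero.2 (hx j hj))]

theorem eval_derivative_derivative_nodal_node (hv : Set.InjOn v s) {i : ι} (hi : i ∈ s) :
    eval (v i) (derivative (derivative (nodal s v))) =
      2 * eval (v i) (derivative (nodal s v)) * ∑ j ∈ s.erase i, (v i - v j)⁻¹ := by
  have hnode : ∀ j ∈ s.erase i, v i ≠ v j := fun j hj h ↦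
    (mem_erase.1 hj).1 (hv (mem_of_mem_erase hj) hi h.symm)
  rw [eval_nodal_derivative_eval_node_eq hi, nodal_eq_mul_nodal_erase hi, mul_assoc,
    ← eval_derivative_nodal_eq_mul_sum_inv hnode]
  simp only [derivative_mul, derivative_add, derivative_sub, derivative_X, derivative_C, sub_zero,
    one_mul, zero_mul, eval_add, eval_mul, eval_sub, eval_X, eval_C, sub_self]
  ring

theorem eval_derivative_nodal_node_ne_zero (hv : Set.InjOn v s) {i : ι} (hi : i ∈ s) :
    eval (v i) (derivative (nodal s v)) ≠ 0 := by
  rw [eval_nodal_derivative_eval_node_eq hi]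
  exact eval_nodal_not_at_node fun j hj h ↦ (mem_erase.1 hj).1 (hv (mem_of_mem_erase hj) hi h.symm)

end Nodal

theorem eq_C_leadingCoeff_mul_nodal {K ι : Type*} [Field K] [Fintype ι] {p : K[X]} {v : ι → K}
    (hv : Function.Injective v) (hroot : ∀ i, p.IsRoot (v i))
    (hdeg : p.natDegree ≤ Fintype.card ι) : p = C p.leadingCoeff * nodal univ v :=
  eq_leadingCoeff_mul_of_monic_of_dvd_of_natDegree_le nodal_monic
    (Fintype.prod_dvd_of_coprime (pairwise_coprime_X_sub_C hv) fun i ↦ dvd_iff_isRoot.2 (hroot i))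
    (by rwa [natDegree_nodal, card_univ])

theorem sum_inv_sub_eq_of_physHermite_roots {ι : Type*} [Fintype ι] [DecidableEq ι] {z : ι → ℝ}
    (hz : Function.Injective z) (hroot : ∀ i, (physHermite (Fintype.card ι)).eval (z i) = 0)
    (i : ι) : ∑ j ∈ univ.erase i, (z i - z j)⁻¹ = z i := by
  set H := physHermite (Fintype.card ι)
  have hH : H = C H.leadingCoeff * nodal univ z :=
    eq_C_leadingCoeff_mul_nodal hz hroot (natDegree_physHermite_le _)
  have hc : H.leadingCoeff ≠ 0 := leadingCoeff_ne_zero.2 (physHermite_ne_zero _)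
  have hode : eval (z i) (derivative (derivative H)) = 2 * z i * eval (z i) (derivative H) := by
    simp [H, derivative_derivative_physHermite, hroot i]
  rw [hH] at hode
  simp only [derivative_C_mul, eval_mul, eval_C,
    eval_derivative_derivative_nodal_node hz.injOn (mem_univ i)] at hode
  refine mul_left_cancel₀ (mul_ne_zero (mul_ne_zero two_ne_zero hc)
    (eval_derivative_nodal_node_ne_zero hz.injOn (mem_univ i))) ?_
  linear_combination hode

section StieltjesMatrix

variable {ι : Type*} [Fintype ι] [DecidableEq ι]

noncomputable def stieltjesMatrix (z : ι → ℝ) : Matrix ι ι ℝ :=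
  of fun i j ↦ if i = j then 1 + ∑ l ∈ univ.erase i, ((z i - z l) ^ 2)⁻¹ else -((z i - z j) ^ 2)⁻¹

theorem stieltjesMatrix_mulVec_apply (z w : ι → ℝ) (i : ι) :
    (stieltjesMatrix z *ᵥ w) i = w i + ∑ j ∈ univ.erase i, ((z i - z j) ^ 2)⁻¹ * (w i - w j) := by
  simp only [mulVec, dotProduct, stieltjesMatrix, of_apply]
  rw [← add_sum_erase _ _ (mem_univ i), if_pos rfl, add_mul, one_mul, sum_mul, add_assoc,
    ← sum_add_distrib]
  congr 1
  refine sum_congr rfl fun j hj ↦ ?_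
  rw [if_neg (ne_of_mem_erase hj).symm]
  ring

theorem stieltjesMatrix_mulVec_sq_sub {z : ι → ℝ} (hz : Function.Injective z)
    (hstieltjes : ∀ i, ∑ j ∈ univ.erase i, (z i - z j)⁻¹ = z i) :
    stieltjesMatrix z *ᵥ (fun i ↦ z i ^ 2 - ((Fintype.card ι : ℝ) - 1) / 2) =
      (3 : ℝ) • fun i ↦ z i ^ 2 - ((Fintype.card ι : ℝ) - 1) / 2 := by
  funext i
  have hterm : ∀ j ∈ univ.erase i, ((z i - z j) ^ 2)⁻¹ * (z i ^ 2 - z j ^ 2) =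
      2 * z i * (z i - z j)⁻¹ - 1 := fun j hj ↦ by
    have : z i - z j ≠ 0 := sub_ne_zero.2 (hz.ne (ne_of_mem_erase hj).symm)
    field_simp
    ring
  have hcard : ((univ.erase i).card : ℝ) = Fintype.card ι - 1 := by
    rw [card_erase_of_mem (mem_univ i), card_univ, Nat.cast_pred (Fintype.card_pos_iff.2 ⟨i⟩)]
  rw [stieltjesMatrix_mulVec_apply, Pi.smul_apply, smul_eq_mul]
  simp only [sub_sub_sub_cancel_right]
  rw [sum_congr rfl hterm, sum_sub_distrib, ← mul_sum, hstieltjes, sum_const, nsmul_one, hcard]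
  ring

end StieltjesMatrix

theorem sq_sub_ne_zero_of_injective {ι : Type*} [Fintype ι] {z : ι → ℝ} (hz : Function.Injective z)
    (hcard : 2 < Fintype.card ι) (c : ℝ) : (fun i ↦ z i ^ 2 - c) ≠ 0 := by
  obtain ⟨a, b, d, hab, had, hbd⟩ := Fintype.two_lt_card_iff.1 hcard
  intro h
  have hsq : ∀ i, z i ^ 2 = c := fun i ↦ sub_eq_zero.1 (congrFun h i)
  have hneg : ∀ {i j}, i ≠ j → z i = -z j := fun {i j} hij ↦
    (sq_eq_sq_iff_eq_or_eq_neg.1 ((hsq i).trans (hsq j).symm)).resolve_left (hz.ne hij)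
  exact hbd (hz (by linarith [hneg hab, hneg had]))

theorem stmt_7 (N : ℕ) (hN : 3 ≤ N) (z : Fin N → ℝ)
    (hord : ∀ i j : Fin N, i < j → z j < z i)
    (hroot : ∀ i, (physHermite N).eval (z i) = 0)
    (S : Matrix (Fin N) (Fin N) ℝ)
    (hS : ∀ i j, S i j = if i = j
      then 1 + ∑ l ∈ Finset.univ.erase i, ((z i - z l) ^ 2)⁻¹
      else -((z i - z j) ^ 2)⁻¹)
    (v : Fin N → ℝ) (hv : ∀ i, v i = (z i) ^ 2 - ((N : ℝ) - 1) / 2) :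
    S.mulVec v = (3 : ℝ) • v ∧ v ≠ 0 := by
  have hz : Function.Injective z := StrictAnti.injective hord
  obtain rfl : S = stieltjesMatrix z := Matrix.ext hS
  obtain rfl : v = fun i ↦ z i ^ 2 - ((Fintype.card (Fin N) : ℝ) - 1) / 2 := by
    simpa using funext hv
  have hstieltjes := sum_inv_sub_eq_of_physHermite_roots hz (by simpa using hroot)
  exact ⟨stieltjesMatrix_mulVec_sq_sub hz hstieltjes,
    sq_sub_ne_zero_of_injective hz (by rw [Fintype.card_fin]; omega) _⟩
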